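/- Let n ≥ 1, let c : [3]^n → {0,1} be a 2-colouring, and suppose there exists a set T_0 ⊆ [n-1] with |T_0| ≥ 4 such that the colour of a word depends only on its contracted pattern among the five patterns s_1 = 132, s_2 = 1232, s_3 = 1312, s_4 = 13232, s_5 = 13132: that is, whenever w, w' ∈ [3]^n satisfy T(w) ⊆ T_0, T(w') ⊆ T_0 and \overline{w} = \overline{w'} = s_i for some i ∈ {1,...,5}, then c(w) = c(w'). Then there exists a monochromatic combinatorial line in [3]^n whose active coordinate set is an interval of [n]. -/

import Mathlib

/-- `L` is a combinatorial line in `[k]^n` with active coordinate set `S`. -/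
def IsCombLine {k n : ℕ} (L : Set (Fin n → Fin k)) (S : Finset (Fin n)) : Prop :=
  S.Nonempty ∧ ∃ a : Fin n → Fin k,
    L = {x | (∀ i ∉ S, x i = a i) ∧ ∀ i ∈ S, ∀ j ∈ S, x i = x j}

/-- `S ⊆ [n]` is an interval `{l, l+1, …, m}`. -/
def IsIntervalSet {n : ℕ} (S : Finset (Fin n)) : Prop :=
  ∃ l m : Fin n, l ≤ m ∧ S = Finset.Icc l m

/-- The set of breakpoints `T(w) ⊆ {1,…,n-1}` of a word `w ∈ [3]^n`: `a` is a breakpoint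
iff `1 ≤ a < n` and the (1-based) letters at positions `a` and `a+1` differ (coordinate
`i : Fin n` encodes 1-based position `i+1`). -/
def breakpoints {n : ℕ} (w : Fin n → Fin 3) : Set ℕ :=
  {a | ∃ h : 1 ≤ a ∧ a < n,
    w ⟨a - 1, lt_of_le_of_lt (Nat.sub_le a 1) h.2⟩ ≠ w ⟨a, h.2⟩}

/-- The contracted word `w̄`, obtained by contracting each maximal constant run of `w`
to a single letter. -/
def contractWord {n : ℕ} (w : Fin n → Fin 3) : List (Fin 3) :=
  (List.ofFn w).destutter (· ≠ ·)

/-- The five patterns `s₁ = 132`, `s₂ = 1232`, `s₃ = 1312`, `s₄ = 13232`, `s₅ = 13132`,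
with letters `1,2,3` encoded as `0,1,2 : Fin 3`. -/
def pattern : Fin 5 → List (Fin 3)
  | 0 => [0, 2, 1]
  | 1 => [0, 1, 2, 1]
  | 2 => [0, 2, 0, 1]
  | 3 => [0, 2, 1, 2, 1]
  | 4 => [0, 2, 0, 2, 1]

/-!
Four breakpoints `t 0 < t 1 < t 2 < t 3` taken from `T₀` cut `[n]` into five nonempty intervals,
the blocks. A word constant on every block has its breakpoints in `T₀` and the contraction of its
five block letters, and letting the letter of one block vary gives a combinatorial line whose
active set is that block. So it suffices to find a monochromatic line among words of length five,
for the 2-colouring `χ` of the patterns induced by `c`. Writing `*` for the active letter, the lines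
`11*32`, `13*22`, `1*232`, `131*2`, `13*32` run through the patterns `s₁ s₂ s₁`, `s₃ s₁ s₁`,
`s₂ s₂ s₄`, `s₃ s₃ s₅`, `s₅ s₄ s₁`. If none of the first four is monochromatic, then
`χ s₂ = χ s₃ ≠ χ s₁`, hence `χ s₄ = χ s₅ = χ s₁` and the last one is.
-/

namespace List

variable {α : Type*} [DecidableEq α]

theorem destutter'_replicate_append_self (a : α) (k : ℕ) (l : List α) :
    (replicate k a ++ l).destutter' (· ≠ ·) a = l.destutter' (· ≠ ·) a := by
  induction k with
  | zero => rfl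
  | succ k ih => simpa [replicate_succ, destutter'_cons] using ih

theorem destutter'_flatMap_replicate (l : List (ℕ × α)) (hl : ∀ p ∈ l, p.1 ≠ 0) (a : α) :
    (l.flatMap fun p => replicate p.1 p.2).destutter' (· ≠ ·) a =
      (l.map Prod.snd).destutter' (· ≠ ·) a := by
  induction l generalizing a with
  | nil => rfl
  | cons p l ih =>
    obtain ⟨k, b⟩ := p
    obtain ⟨k, rfl⟩ := Nat.exists_eq_succ_of_ne_zero (hl _ mem_cons_self)
    have ih' := ih fun q hq => hl q (mem_cons_of_mem _ hq)
    simp only [flatMap_cons, map_cons, replicate_succ, cons_append, destutter'_cons,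
      destutter'_replicate_append_self, ih']
    split_ifs with hab
    · rfl
    · rw [not_not.1 hab, destutter'_replicate_append_self, ih']

theorem destutter_flatMap_replicate (l : List (ℕ × α)) (hl : ∀ p ∈ l, p.1 ≠ 0) :
    (l.flatMap fun p => replicate p.1 p.2).destutter (· ≠ ·) =
      (l.map Prod.snd).destutter (· ≠ ·) := by
  rcases l with _ | ⟨⟨k, b⟩, l⟩
  · rfl
  obtain ⟨k, rfl⟩ := Nat.exists_eq_succ_of_ne_zero (hl _ mem_cons_self)
  simp only [flatMap_cons, map_cons, replicate_succ, cons_append, destutter_cons',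
    destutter'_replicate_append_self]
  exact destutter'_flatMap_replicate l (fun q hq => hl q (mem_cons_of_mem _ hq)) b

end List

section BlockWord

variable {n : ℕ} (t : Fin 4 → ℕ)

def blockIndex (i : ℕ) : Fin 5 :=
  if i < t 0 then 0 else if i < t 1 then 1 else if i < t 2 then 2 else if i < t 3 then 3 else 4

def blockWord (b : Fin 5 → Fin 3) : Fin n → Fin 3 :=
  fun i => b (blockIndex t i)

def block (j : Fin 5) : Finset (Fin n) :=
  {i | blockIndex t i = j}

theorem breakpoints_blockWord_subset (b : Fin 5 → Fin 3) :
    breakpoints (blockWord (n := n) t b) ⊆ Set.range t := by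
  rintro a ⟨ha, hne⟩
  by_contra hat
  simp only [Set.mem_range, not_exists] at hat
  have := hat 0; have := hat 1; have := hat 2; have := hat 3
  apply hne
  simp only [blockWord, blockIndex]
  split_ifs <;> first | rfl | omega

theorem ofFn_blockWord (ht : Monotone t) (h3 : t 3 ≤ n) (b : Fin 5 → Fin 3) :
    List.ofFn (blockWord (n := n) t b) =
      [(t 0, b 0), (t 1 - t 0, b 1), (t 2 - t 1, b 2), (t 3 - t 2, b 3), (n - t 3, b 4)].flatMap
        fun p => List.replicate p.1 p.2 := by
  have h01 := ht (show (0 : Fin 4) ≤ 1 by decide)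
  have h12 := ht (show (1 : Fin 4) ≤ 2 by decide)
  have h23 := ht (show (2 : Fin 4) ≤ 3 by decide)
  apply List.ext_getElem
  · simp only [List.length_ofFn, List.flatMap_cons, List.flatMap_nil, List.length_append,
      List.length_replicate, List.length_nil]
    omega
  intro i hi _
  simp only [List.length_ofFn] at hi
  simp only [List.getElem_ofFn, blockWord, blockIndex, List.flatMap_cons, List.flatMap_nil,
    List.append_nil, List.getElem_append, List.length_replicate,
    List.getElem_replicate]
  split_ifs <;> first | rfl | omega

theorem contractWord_blockWord (ht : StrictMono t) (h0 : 0 < t 0) (h3 : t 3 < n)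
    (b : Fin 5 → Fin 3) :
    contractWord (blockWord (n := n) t b) = (List.ofFn b).destutter (· ≠ ·) := by
  have h01 := ht (show (0 : Fin 4) < 1 by decide)
  have h12 := ht (show (1 : Fin 4) < 2 by decide)
  have h23 := ht (show (2 : Fin 4) < 3 by decide)
  rw [contractWord, ofFn_blockWord t ht.monotone h3.le, List.destutter_flatMap_replicate]
  · rfl
  · simp only [List.mem_cons, List.not_mem_nil, or_false]
    rintro _ (rfl | rfl | rfl | rfl | rfl) <;> dsimp only <;> omega

theorem blockWord_update (b : Fin 5 → Fin 3) (j : Fin 5) (v : Fin 3) :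
    blockWord (n := n) t (Function.update b j v) =
      (block t j).piecewise (fun _ => v) (blockWord t b) := by
  ext i : 1
  simp only [blockWord, Finset.piecewise, block, Finset.mem_filter, Finset.mem_univ, true_and,
    Function.update_apply]

theorem isIntervalSet_block (ht : StrictMono t) (h0 : 0 < t 0) (h3 : t 3 < n) (j : Fin 5) :
    IsIntervalSet (block (n := n) t j) := by
  have h01 := ht (show (0 : Fin 4) < 1 by decide)
  have h12 := ht (show (1 : Fin 4) < 2 by decide)
  have h23 := ht (show (2 : Fin 4) < 3 by decide)
  have of_iff (l m : ℕ) (hlm : l ≤ m) (hm : m < n)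
      (h : ∀ i < n, blockIndex t i = j ↔ l ≤ i ∧ i ≤ m) : IsIntervalSet (block (n := n) t j) :=
    ⟨⟨l, by omega⟩, ⟨m, hm⟩, hlm, by
      ext i
      simp only [block, Finset.mem_filter, Finset.mem_univ, h i i.isLt, true_and, Finset.mem_Icc,
        Fin.le_def]⟩
  fin_cases j <;>
    [refine of_iff 0 (t 0 - 1) ?_ ?_ ?_; refine of_iff (t 0) (t 1 - 1) ?_ ?_ ?_;
      refine of_iff (t 1) (t 2 - 1) ?_ ?_ ?_; refine of_iff (t 2) (t 3 - 1) ?_ ?_ ?_;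
      refine of_iff (t 3) (n - 1) ?_ ?_ ?_]
  all_goals first
    | omega
    | intro i hi
      unfold blockIndex
      split_ifs <;>
        simp only [Fin.isValue, Fin.reduceEq, Fin.reduceFinMk, true_iff, false_iff] <;> omega

end BlockWord

theorem IsIntervalSet.nonempty {n : ℕ} {S : Finset (Fin n)} (hS : IsIntervalSet S) :
    S.Nonempty := by
  obtain ⟨l, m, hlm, rfl⟩ := hS
  exact Finset.nonempty_Icc.2 hlm

theorem isCombLine_range_piecewise {k n : ℕ} {S : Finset (Fin n)} (hS : S.Nonempty)
    (a : Fin n → Fin k) :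
    IsCombLine (Set.range fun v : Fin k => S.piecewise (fun _ => v) a) S := by
  refine ⟨hS, a, Set.ext fun x => ⟨?_, ?_⟩⟩
  · rintro ⟨v, rfl⟩
    dsimp only
    exact ⟨fun i hi => S.piecewise_eq_of_notMem _ _ hi,
      fun i hi j hj => by rw [S.piecewise_eq_of_mem _ _ hi, S.piecewise_eq_of_mem _ _ hj]⟩
  · rintro ⟨hout, hin⟩
    obtain ⟨i₀, hi₀⟩ := hS
    refine ⟨x i₀, funext fun i => ?_⟩
    dsimp only
    by_cases hi : i ∈ S
    · rw [S.piecewise_eq_of_mem _ _ hi, hin i hi i₀ hi₀]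
    · rw [S.piecewise_eq_of_notMem _ _ hi, hout i hi]

def patternWord : Fin 5 → Fin 5 → Fin 3 :=
  ![![0, 0, 2, 2, 1], ![0, 1, 1, 2, 1], ![0, 2, 0, 0, 1], ![0, 2, 1, 2, 1], ![0, 2, 0, 2, 1]]

theorem destutter_patternWord (i : Fin 5) :
    (List.ofFn (patternWord i)).destutter (· ≠ ·) = pattern i := by
  revert i; decide

/-- The five lines of the proof sketch above, letters encoded as in `pattern`: line `l` lets the
letter of block `keyLineBlock l` of `keyLineBase l` vary, and `keyLinePattern l v` is the index of
the pattern of its point with active letter `v`. -/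
def keyLineBase : Fin 5 → Fin 5 → Fin 3 :=
  ![![0, 0, 0, 2, 1], ![0, 2, 0, 1, 1], ![0, 0, 1, 2, 1], ![0, 2, 0, 0, 1], ![0, 2, 0, 2, 1]]

def keyLineBlock : Fin 5 → Fin 5 :=
  ![2, 2, 1, 3, 2]

def keyLinePattern : Fin 5 → Fin 3 → Fin 5 :=
  ![![0, 1, 0], ![2, 0, 0], ![1, 1, 3], ![2, 2, 4], ![4, 3, 0]]

theorem destutter_keyLine (l : Fin 5) (v : Fin 3) :
    (List.ofFn (Function.update (keyLineBase l) (keyLineBlock l) v)).destutter (· ≠ ·) =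
      pattern (keyLinePattern l v) := by
  revert l v; decide

theorem exists_monochromatic_keyLine (χ : Fin 5 → Fin 2) :
    ∃ l, ∀ v, χ (keyLinePattern l v) = χ (keyLinePattern l 0) := by
  revert χ; decide

theorem mono_interval_line_of_pattern_colouring (n : ℕ)
    (c : (Fin n → Fin 3) → Fin 2) (T₀ : Finset ℕ) (hT₀ : T₀ ⊆ Finset.Ico 1 n)
    (hcard : 4 ≤ T₀.card)
    (hc : ∀ (i : Fin 5) (w w' : Fin n → Fin 3),
      breakpoints w ⊆ ↑T₀ → breakpoints w' ⊆ ↑T₀ →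
      contractWord w = pattern i → contractWord w' = pattern i → c w = c w') :
    ∃ (L : Set (Fin n → Fin 3)) (S : Finset (Fin n)),
      IsCombLine L S ∧ IsIntervalSet S ∧ ∀ x ∈ L, ∀ y ∈ L, c x = c y := by
  set t := T₀.orderEmbOfCardLe hcard
  have htT (i : Fin 4) : t i ∈ T₀ := T₀.orderEmbOfCardLe_mem hcard i
  have h0 : 0 < t 0 := (Finset.mem_Ico.1 (hT₀ (htT 0))).1
  have h3 : t 3 < n := (Finset.mem_Ico.1 (hT₀ (htT 3))).2
  have hbreak (b : Fin 5 → Fin 3) : breakpoints (blockWord (n := n) t b) ⊆ T₀ :=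
    (breakpoints_blockWord_subset t b).trans (Set.range_subset_iff.2 htT)
  have hcolour (i : Fin 5) (b : Fin 5 → Fin 3) (hb : (List.ofFn b).destutter (· ≠ ·) = pattern i) :
      c (blockWord t b) = c (blockWord t (patternWord i)) :=
    hc i _ _ (hbreak b) (hbreak _) ((contractWord_blockWord t t.strictMono h0 h3 b).trans hb)
      ((contractWord_blockWord t t.strictMono h0 h3 _).trans (destutter_patternWord i))
  obtain ⟨l, hl⟩ := exists_monochromatic_keyLine fun i => c (blockWord t (patternWord i))
  have hS := isIntervalSet_block t t.strictMono h0 h3 (keyLineBlock l)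
  refine ⟨_, _, isCombLine_range_piecewise hS.nonempty (blockWord t (keyLineBase l)), hS, ?_⟩
  rintro _ ⟨v, rfl⟩ _ ⟨v', rfl⟩
  simp only [← blockWord_update]
  rw [hcolour _ _ (destutter_keyLine l v), hcolour _ _ (destutter_keyLine l v'), hl v, hl v']
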